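/- arXiv:1309.7209 — 3 statements merged into one kernel-verified Lean document; each statement's English description precedes it below -/
import Mathlib

section
/- (Proposition 1: the acceptance rate is a decreasing bijection of the scaling.) Let B be a real random variable with a Lebesgue density ρ satisfying ρ(b) = e^{−b} ρ(−b) for all b, and define α(ℓ) = 2 · E[Φ(B/ℓ − ℓ/2)] for ℓ > 0, where Φ is the standard normal cumulative distribution function. Then: (i) α is continuous on (0,∞); (ii) α is strictly decreasing on (0,∞); (iii) α(ℓ) → 0 as ℓ → ∞; (iv) α(ℓ) → α_max := 2·P(B > 0) as ℓ → 0⁺. Consequently α maps (0,∞) bijectively onto the interval of values strictly between 0 and α_max. -/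
open MeasureTheory ProbabilityTheory Real Filter Topology

/-- The standard normal cumulative distribution function `Φ`. -/
noncomputable def stdNormalCDF (x : ℝ) : ℝ :=
  ∫ t in Set.Iic x, Real.exp (-t ^ 2 / 2) / Real.sqrt (2 * Real.pi)

open Set
open scoped ENNReal NNReal

noncomputable def stdGauss (t : ℝ) : ℝ := Real.exp (-t ^ 2 / 2) / Real.sqrt (2 * Real.pi)

lemma stdGauss_cont : Continuous stdGauss := by
  unfold stdGauss; fun_prop

lemma stdGauss_pos (t : ℝ) : 0 < stdGauss t := by
  unfold stdGauss
  positivity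

lemma stdGauss_integrable : Integrable stdGauss := by
  have h : Integrable (fun t : ℝ => Real.exp (-(1/2) * t ^ 2)) := integrable_exp_neg_mul_sq (by norm_num)
  have := h.div_const (Real.sqrt (2 * Real.pi))
  convert this using 2 with t
  unfold stdGauss
  ring_nf

lemma stdGauss_integral : ∫ t, stdGauss t = 1 := by
  unfold stdGauss
  rw [integral_div]
  have h := integral_gaussian (1/2)
  have h2 : ∫ t : ℝ, Real.exp (-t ^ 2 / 2) = Real.sqrt (2 * Real.pi) := by
    rw [show (Real.sqrt (2 * Real.pi)) = Real.sqrt (Real.pi / (1/2)) by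
      rw [div_div_eq_mul_div, div_one, mul_comm]]
    rw [← h]
    congr 1 with t
    ring_nf
  rw [h2, div_self (by positivity)]

lemma stdNormalCDF_def (x : ℝ) : stdNormalCDF x = ∫ t in Set.Iic x, stdGauss t := rfl

lemma stdNormalCDF_pos (x : ℝ) : 0 < stdNormalCDF x := by
  rw [stdNormalCDF_def]
  apply setIntegral_pos_iff_support_of_nonneg_ae (Eventually.of_forall fun t => (stdGauss_pos t).le)
    (stdGauss_integrable.integrableOn) |>.2
  have : Function.support stdGauss = Set.univ := by
    ext t; simp [Function.mem_support, (stdGauss_pos t).ne']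
  rw [this, Set.univ_inter]
  simp [Real.volume_Iic]

lemma stdNormalCDF_hasDerivAt (x : ℝ) : HasDerivAt stdNormalCDF (stdGauss x) x := by
  have key : ∀ y : ℝ, stdNormalCDF y = stdNormalCDF 0 + ∫ t in (0:ℝ)..y, stdGauss t := by
    intro y
    rw [stdNormalCDF_def, stdNormalCDF_def]
    have := intervalIntegral.integral_Iic_sub_Iic (f := stdGauss) (μ := volume) (a := 0) (b := y)
      stdGauss_integrable.integrableOn stdGauss_integrable.integrableOn
    linarith
  have h : HasDerivAt (fun y => stdNormalCDF 0 + ∫ t in (0:ℝ)..y, stdGauss t) (stdGauss x) x := by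
    apply HasDerivAt.const_add
    exact intervalIntegral.integral_hasDerivAt_right
      stdGauss_integrable.intervalIntegrable
      (stdGauss_cont.stronglyMeasurable.stronglyMeasurableAtFilter)
      stdGauss_cont.continuousAt
  exact h.congr_of_eventuallyEq (Eventually.of_forall key)

lemma stdNormalCDF_continuous : Continuous stdNormalCDF :=
  continuous_iff_continuousAt.2 fun x => (stdNormalCDF_hasDerivAt x).continuousAt

lemma stdNormalCDF_eq_indicator (x : ℝ) :
    stdNormalCDF x = ∫ t, Set.indicator (Set.Iic x) stdGauss t := by
  rw [stdNormalCDF_def, integral_indicator measurableSet_Iic]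

lemma stdNormalCDF_tendsto_atTop : Tendsto stdNormalCDF atTop (𝓝 1) := by
  rw [← stdGauss_integral]
  apply Tendsto.congr (fun x => (stdNormalCDF_eq_indicator x).symm)
  apply tendsto_integral_filter_of_dominated_convergence stdGauss
  · exact Eventually.of_forall fun x =>
      (stdGauss_cont.aestronglyMeasurable).indicator measurableSet_Iic
  · exact Eventually.of_forall fun x => Eventually.of_forall fun t => by
      rw [Real.norm_eq_abs, abs_of_nonneg (Set.indicator_nonneg (fun t _ => (stdGauss_pos t).le) t)]
      exact Set.indicator_le_self' (fun t _ => (stdGauss_pos t).le) t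
  · exact stdGauss_integrable
  · refine Eventually.of_forall fun t => ?_
    have : ∀ᶠ x in atTop, Set.indicator (Set.Iic x) stdGauss t = stdGauss t := by
      filter_upwards [eventually_ge_atTop t] with x hx
      exact Set.indicator_of_mem (Set.mem_Iic.mpr hx) _
    exact Tendsto.congr' (this.mono fun x hx => hx.symm) tendsto_const_nhds

lemma stdNormalCDF_tendsto_atBot : Tendsto stdNormalCDF atBot (𝓝 0) := by
  have h0 : (0:ℝ) = ∫ _t : ℝ, (0:ℝ) := by simp
  rw [h0]
  apply Tendsto.congr (fun x => (stdNormalCDF_eq_indicator x).symm)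
  apply tendsto_integral_filter_of_dominated_convergence stdGauss
  · exact Eventually.of_forall fun x =>
      (stdGauss_cont.aestronglyMeasurable).indicator measurableSet_Iic
  · exact Eventually.of_forall fun x => Eventually.of_forall fun t => by
      rw [Real.norm_eq_abs, abs_of_nonneg (Set.indicator_nonneg (fun t _ => (stdGauss_pos t).le) t)]
      exact Set.indicator_le_self' (fun t _ => (stdGauss_pos t).le) t
  · exact stdGauss_integrable
  · refine Eventually.of_forall fun t => ?_
    have : ∀ᶠ x in atBot, Set.indicator (Set.Iic x) stdGauss t = 0 := by
      filter_upwards [eventually_lt_atBot t] with x hx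
      exact Set.indicator_of_notMem (by simpa using hx.not_ge) _
    exact Tendsto.congr' (this.mono fun x hx => hx.symm) tendsto_const_nhds

lemma stdNormalCDF_le_one (x : ℝ) : stdNormalCDF x ≤ 1 := by
  rw [← stdGauss_integral, stdNormalCDF_def]
  apply setIntegral_le_integral stdGauss_integrable
    (Eventually.of_forall fun t => (stdGauss_pos t).le)

noncomputable def Fb (b ℓ : ℝ) : ℝ :=
  stdNormalCDF (b / ℓ - ℓ / 2) + Real.exp b * stdNormalCDF (-b / ℓ - ℓ / 2)

lemma exp_mul_stdGauss {b ℓ : ℝ} (hℓ : ℓ ≠ 0) :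
    Real.exp b * stdGauss (-b / ℓ - ℓ / 2) = stdGauss (b / ℓ - ℓ / 2) := by
  unfold stdGauss
  rw [mul_div_assoc', ← Real.exp_add]
  congr 2
  field_simp
  ring

lemma Fb_hasDerivAt {b ℓ : ℝ} (hℓ : 0 < ℓ) :
    HasDerivAt (Fb b) (-stdGauss (b / ℓ - ℓ / 2)) ℓ := by
  have hℓ' : ℓ ≠ 0 := hℓ.ne'
  have h1 : HasDerivAt (fun ℓ : ℝ => b / ℓ - ℓ / 2) (b * (-(ℓ ^ 2)⁻¹) - 1 / 2) ℓ := by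
    have := ((hasDerivAt_inv hℓ').const_mul b).sub ((hasDerivAt_id ℓ).div_const 2)
    simpa [div_eq_mul_inv, Pi.sub_def] using this
  have h2 : HasDerivAt (fun ℓ : ℝ => -b / ℓ - ℓ / 2) (-b * (-(ℓ ^ 2)⁻¹) - 1 / 2) ℓ := by
    have := ((hasDerivAt_inv hℓ').const_mul (-b)).sub ((hasDerivAt_id ℓ).div_const 2)
    simpa [div_eq_mul_inv, Pi.sub_def] using this
  have H1 := (stdNormalCDF_hasDerivAt (b / ℓ - ℓ / 2)).comp ℓ h1
  have H2 := ((stdNormalCDF_hasDerivAt (-b / ℓ - ℓ / 2)).comp ℓ h2).const_mul (Real.exp b)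
  have := H1.add H2
  refine this.congr_deriv ?_
  have key := exp_mul_stdGauss (b := b) hℓ'
  rw [show Real.exp b * (stdGauss (-b / ℓ - ℓ / 2) * (-b * -(ℓ ^ 2)⁻¹ - 1 / 2)) =
      (Real.exp b * stdGauss (-b / ℓ - ℓ / 2)) * (-b * -(ℓ ^ 2)⁻¹ - 1 / 2) by ring, key]
  ring

lemma Fb_continuousOn (b : ℝ) : ContinuousOn (Fb b) (Set.Ioi 0) := fun ℓ hℓ =>
  ((Fb_hasDerivAt (b := b) hℓ).continuousAt).continuousWithinAt

lemma Fb_strictAntiOn (b : ℝ) : StrictAntiOn (Fb b) (Set.Ioi 0) := by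
  apply strictAntiOn_of_deriv_neg (convex_Ioi 0) (Fb_continuousOn b)
  intro ℓ hℓ
  rw [interior_Ioi] at hℓ
  rw [(Fb_hasDerivAt hℓ).deriv]
  exact neg_neg_iff_pos.mpr (stdGauss_pos _)

lemma Fb_tendsto_one {b : ℝ} (hb : 0 < b) : Tendsto (Fb b) (𝓝[>] 0) (𝓝 1) := by
  have l1 : Tendsto (fun ℓ : ℝ => b / ℓ - ℓ / 2) (𝓝[>] 0) atTop := by
    apply Tendsto.atTop_add (f := fun ℓ : ℝ => b / ℓ) (C := 0)
    · simp_rw [div_eq_mul_inv]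
      exact tendsto_inv_nhdsGT_zero.const_mul_atTop hb
    · have : Tendsto (fun ℓ : ℝ => -(ℓ / 2)) (𝓝 0) (𝓝 (-(0 / 2))) :=
        ((continuous_id.div_const 2).neg.tendsto 0)
      simpa using this.mono_left nhdsWithin_le_nhds
  have l2 : Tendsto (fun ℓ : ℝ => -b / ℓ - ℓ / 2) (𝓝[>] 0) atBot := by
    have inner : Tendsto (fun ℓ : ℝ => b / ℓ + ℓ / 2) (𝓝[>] 0) atTop := by
      apply Tendsto.atTop_add (f := fun ℓ : ℝ => b / ℓ) (C := 0)
      · simp_rw [div_eq_mul_inv]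
        exact tendsto_inv_nhdsGT_zero.const_mul_atTop hb
      · have : Tendsto (fun ℓ : ℝ => ℓ / 2) (𝓝 0) (𝓝 (0 / 2)) :=
          ((continuous_id.div_const 2).tendsto 0)
        simpa using this.mono_left nhdsWithin_le_nhds
    exact (tendsto_neg_atTop_atBot.comp inner).congr (fun ℓ => by
      simp only [Function.comp_apply]; ring)
  have := (stdNormalCDF_tendsto_atTop.comp l1).add
    ((stdNormalCDF_tendsto_atBot.comp l2).const_mul (Real.exp b))
  exact (by simpa using this : Tendsto (fun x => stdNormalCDF (b / x - x / 2) +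
    Real.exp b * stdNormalCDF (-b / x - x / 2)) (𝓝[>] 0) (𝓝 1))

lemma Fb_le_one {b : ℝ} (hb : 0 < b) {ℓ : ℝ} (hℓ : 0 < ℓ) : Fb b ℓ ≤ 1 := by
  refine ge_of_tendsto (Fb_tendsto_one hb) ?_
  filter_upwards [Ioo_mem_nhdsGT hℓ] with t ht
  exact (Fb_strictAntiOn b ht.1 hℓ ht.2).le

lemma Fb_lt_one {b : ℝ} (hb : 0 < b) {ℓ : ℝ} (hℓ : 0 < ℓ) : Fb b ℓ < 1 :=
  lt_of_lt_of_le (Fb_strictAntiOn b (half_pos hℓ) hℓ (half_lt_self hℓ))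
    (Fb_le_one hb (half_pos hℓ))

section MeasurePart

variable {ρ : ℝ → ℝ}

lemma rho_refl_eq (hρ_sym : ∀ b, ρ b = Real.exp (-b) * ρ (-b)) (b : ℝ) :
    ρ (-b) = Real.exp b * ρ b := by
  rw [hρ_sym b, ← mul_assoc, ← Real.exp_add]
  simp

lemma integrableOn_comp_neg {f : ℝ → ℝ} (hf : IntegrableOn f (Set.Iic 0)) :
    IntegrableOn (fun x => f (-x)) (Set.Ioi (0:ℝ)) := by
  have := ((Measure.measurePreserving_neg (volume : Measure ℝ)).integrableOn_comp_preimage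
      (Homeomorph.neg ℝ).measurableEmbedding (f := f) (s := Set.Iic 0)).2 hf
  simpa [Function.comp_def] using this.mono_set (by intro x hx; simp only [Set.mem_preimage, Set.neg_preimage, Set.neg_Iic, neg_zero, Set.mem_Ici]; exact (Set.mem_Ioi.mp hx).le)

lemma key_split (hρ_meas : Measurable ρ) (hρ_nonneg : ∀ b, 0 ≤ ρ b)
    (hρ_sym : ∀ b, ρ b = Real.exp (-b) * ρ (-b)) (hρ_int : Integrable ρ)
    {h : ℝ → ℝ} (hh_meas : Measurable h) (hh_bd : ∀ b, |h b| ≤ 1) :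
    ∫ b, h b * ρ b = ∫ b in Set.Ioi 0, (h b + Real.exp b * h (-b)) * ρ b := by
  have hint : Integrable (fun b => h b * ρ b) := by
    apply Integrable.mono' hρ_int ((hh_meas.mul hρ_meas).aestronglyMeasurable)
    refine Eventually.of_forall fun b => ?_
    rw [Real.norm_eq_abs, Pi.mul_apply, abs_mul, abs_of_nonneg (hρ_nonneg b)]
    calc |h b| * ρ b ≤ 1 * ρ b := mul_le_mul_of_nonneg_right (hh_bd b) (hρ_nonneg b)
    _ = ρ b := one_mul _
  have hint2 : IntegrableOn (fun b => h (-b) * ρ (-b)) (Set.Ioi 0) := by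
    apply integrableOn_comp_neg (f := fun b => h b * ρ b) hint.integrableOn
  have split : ∫ b, h b * ρ b =
      (∫ b in Set.Iic 0, h b * ρ b) + ∫ b in Set.Ioi 0, h b * ρ b :=
    (intervalIntegral.integral_Iic_add_Ioi hint.integrableOn hint.integrableOn).symm
  have refl : ∫ b in Set.Iic 0, h b * ρ b = ∫ b in Set.Ioi 0, h (-b) * ρ (-b) := by
    have := integral_comp_neg_Ioi (0:ℝ) (fun b => h b * ρ b)
    rw [neg_zero] at this
    exact this.symm
  rw [split, refl, ← integral_add hint2 hint.integrableOn]
  apply setIntegral_congr_fun measurableSet_Ioi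
  intro b _
  show h (-b) * ρ (-b) + h b * ρ b = (h b + Real.exp b * h (-b)) * ρ b
  rw [rho_refl_eq hρ_sym b]
  ring

end MeasurePart

lemma Fb_pos (b ℓ : ℝ) : 0 < Fb b ℓ :=
  add_pos (stdNormalCDF_pos _) (mul_pos (Real.exp_pos _) (stdNormalCDF_pos _))

lemma Fb_continuous_b (ℓ : ℝ) : Continuous (fun b => Fb b ℓ) := by
  unfold Fb
  apply Continuous.add
  · exact stdNormalCDF_continuous.comp ((continuous_id.div_const ℓ).sub continuous_const)
  · exact Real.continuous_exp.mul
      (stdNormalCDF_continuous.comp ((continuous_id.neg.div_const ℓ).sub continuous_const))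

lemma aux_top {b : ℝ} (hb : 0 < b) :
    Tendsto (fun ℓ : ℝ => b / ℓ - ℓ / 2) (𝓝[>] 0) atTop := by
  apply Tendsto.atTop_add (f := fun ℓ : ℝ => b / ℓ) (C := 0)
  · simp_rw [div_eq_mul_inv]
    exact tendsto_inv_nhdsGT_zero.const_mul_atTop hb
  · have : Tendsto (fun ℓ : ℝ => -(ℓ / 2)) (𝓝 0) (𝓝 (-(0 / 2))) :=
      ((continuous_id.div_const 2).neg.tendsto 0)
    simpa using this.mono_left nhdsWithin_le_nhds

lemma aux_bot {b : ℝ} (hb : b < 0) :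
    Tendsto (fun ℓ : ℝ => b / ℓ - ℓ / 2) (𝓝[>] 0) atBot := by
  have inner : Tendsto (fun ℓ : ℝ => -b / ℓ + ℓ / 2) (𝓝[>] 0) atTop := by
    apply Tendsto.atTop_add (f := fun ℓ : ℝ => -b / ℓ) (C := 0)
    · simp_rw [div_eq_mul_inv]
      exact tendsto_inv_nhdsGT_zero.const_mul_atTop (by linarith)
    · have : Tendsto (fun ℓ : ℝ => ℓ / 2) (𝓝 0) (𝓝 (0 / 2)) :=
        ((continuous_id.div_const 2).tendsto 0)
      simpa using this.mono_left nhdsWithin_le_nhds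
  exact (tendsto_neg_atTop_atBot.comp inner).congr (fun ℓ => by
    simp only [Function.comp_apply]; ring)

lemma aux_inf (b : ℝ) : Tendsto (fun ℓ : ℝ => b / ℓ - ℓ / 2) atTop atBot := by
  have h1 : Tendsto (fun ℓ : ℝ => b / ℓ) atTop (𝓝 0) :=
    Tendsto.div_atTop tendsto_const_nhds tendsto_id
  have h2 : Tendsto (fun ℓ : ℝ => -(ℓ / 2)) atTop atBot :=
    tendsto_neg_atTop_atBot.comp (tendsto_id.atTop_div_const (by norm_num))
  exact (h1.add_atBot h2).congr (fun ℓ => by ring)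

/-- Proposition 1: with `B` having density `ρ` satisfying
`ρ(b) = e^{−b} ρ(−b)` and `α(ℓ) = 2 E[Φ(B/ℓ − ℓ/2)]`, the map `α` is continuous and
strictly decreasing on `(0,∞)`, tends to `0` at `∞` and to `α_max = 2 P(B > 0)` at
`0⁺`, and maps `(0,∞)` bijectively onto the values strictly between `0` and `α_max`. -/
theorem stmt7
    (ρ : ℝ → ℝ) (hρ_meas : Measurable ρ) (hρ_nonneg : ∀ b, 0 ≤ ρ b)
    (μB : Measure ℝ)
    (hμB : μB = volume.withDensity fun b => ENNReal.ofReal (ρ b))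
    (hμB_prob : IsProbabilityMeasure μB)
    (hρ_sym : ∀ b, ρ b = Real.exp (-b) * ρ (-b))
    (α : ℝ → ℝ) (hα : ∀ ℓ, α ℓ = 2 * ∫ b, stdNormalCDF (b / ℓ - ℓ / 2) ∂μB)
    (αmax : ℝ) (hαmax : αmax = 2 * (μB (Set.Ioi 0)).toReal) :
    ContinuousOn α (Set.Ioi 0) ∧
      StrictAntiOn α (Set.Ioi 0) ∧
      Tendsto α atTop (𝓝 0) ∧
      Tendsto α (𝓝[>] 0) (𝓝 αmax) ∧
      Set.BijOn α (Set.Ioi 0) (Set.Ioo 0 αmax) := by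
  haveI := hμB_prob
  -- total mass
  have huniv : (∫⁻ b, ENNReal.ofReal (ρ b)) = 1 := by
    have h := hμB_prob.measure_univ
    rw [hμB, withDensity_apply _ MeasurableSet.univ, Measure.restrict_univ] at h
    exact h
  have hρ_int : Integrable ρ := by
    have : Integrable (fun b => (ENNReal.ofReal (ρ b)).toReal) :=
      integrable_toReal_of_lintegral_ne_top hρ_meas.ennreal_ofReal.aemeasurable
        (by rw [huniv]; exact ENNReal.one_ne_top)
    refine this.congr (Eventually.of_forall fun b => ?_)
    exact ENNReal.toReal_ofReal (hρ_nonneg b)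
  -- integrals against μB
  have hμint : ∀ h : ℝ → ℝ, Measurable h → (∫ b, h b ∂μB) = ∫ b, h b * ρ b := by
    intro h hh
    rw [hμB]
    rw [show (fun b => ENNReal.ofReal (ρ b)) = (fun b => ((ρ b).toNNReal : ℝ≥0∞)) from rfl,
      integral_withDensity_eq_integral_smul hρ_meas.real_toNNReal h]
    congr 1 with b
    simp [NNReal.smul_def, Real.coe_toNNReal _ (hρ_nonneg b), mul_comm]
  -- CDF integrand facts
  have hcdf_meas : ∀ ℓ : ℝ, Measurable fun b => stdNormalCDF (b / ℓ - ℓ / 2) := fun ℓ =>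
    (stdNormalCDF_continuous.comp ((continuous_id.div_const ℓ).sub continuous_const)).measurable
  have hcdf_bd : ∀ x : ℝ, |stdNormalCDF x| ≤ 1 := fun x =>
    abs_le.2 ⟨by linarith [stdNormalCDF_pos x], stdNormalCDF_le_one x⟩
  -- the key representation
  have hG : ∀ ℓ : ℝ, (∫ b, stdNormalCDF (b / ℓ - ℓ / 2) ∂μB) = ∫ b in Set.Ioi 0, Fb b ℓ * ρ b := by
    intro ℓ
    rw [hμint _ (hcdf_meas ℓ)]
    exact key_split hρ_meas hρ_nonneg hρ_sym hρ_int (hcdf_meas ℓ) (fun b => hcdf_bd _)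
  -- αmax representation
  have hmaxrep : (μB (Set.Ioi 0)).toReal = ∫ b in Set.Ioi 0, ρ b := by
    rw [hμB, withDensity_apply _ measurableSet_Ioi,
      integral_eq_lintegral_of_nonneg_ae (Eventually.of_forall hρ_nonneg)
        hρ_meas.aestronglyMeasurable]
  -- positive mass on the right
  have hT : 0 < volume ({b | 0 < ρ b} ∩ Set.Ioi 0) := by
    by_contra hc
    push_neg at hc
    have hT0 : volume ({b | 0 < ρ b} ∩ Set.Ioi 0) = 0 := le_antisymm hc zero_le
    have hTneg : volume ({b | 0 < ρ b} ∩ Set.Iio 0) = 0 := by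
      have hsub : {b | 0 < ρ b} ∩ Set.Iio 0 ⊆ Neg.neg ⁻¹' ({b | 0 < ρ b} ∩ Set.Ioi 0) := by
        rintro b ⟨hb1, hb2⟩
        refine ⟨?_, by simpa using hb2⟩
        show 0 < ρ (-b)
        rw [rho_refl_eq hρ_sym b]
        exact mul_pos (Real.exp_pos b) hb1
      have := (Measure.measurePreserving_neg (volume : Measure ℝ)).measure_preimage
        (s := {b | 0 < ρ b} ∩ Set.Ioi 0)
        (((measurableSet_lt measurable_const hρ_meas).inter measurableSet_Ioi).nullMeasurableSet)
      exact le_antisymm (le_trans (measure_mono hsub) (le_of_eq (this.trans hT0))) zero_le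
    have hS0 : volume {b | 0 < ρ b} = 0 := by
      have hsub : {b | 0 < ρ b} ⊆
          ({b | 0 < ρ b} ∩ Set.Ioi 0) ∪ ({b | 0 < ρ b} ∩ Set.Iio 0) ∪ {(0:ℝ)} := by
        intro b hb
        rcases lt_trichotomy b 0 with h | h | h
        · exact Or.inl (Or.inr ⟨hb, h⟩)
        · exact Or.inr (by simp [h])
        · exact Or.inl (Or.inl ⟨hb, h⟩)
      refine le_antisymm (le_trans (measure_mono hsub) ?_) zero_le
      refine le_trans (measure_union_le _ _) ?_
      rw [Real.volume_singleton]
      refine le_trans (add_le_add_left (measure_union_le _ _) _) ?_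
      rw [hT0, hTneg]
      simp
    have : (∫⁻ b, ENNReal.ofReal (ρ b)) = 0 := by
      rw [← lintegral_zero]
      apply lintegral_congr_ae
      have : ∀ᵐ b, b ∉ {b | 0 < ρ b} := by
        rw [ae_iff]
        simpa using hS0
      filter_upwards [this] with b hb
      simp only [Set.mem_setOf_eq, not_lt] at hb
      simp [le_antisymm hb (hρ_nonneg b)]
    rw [huniv] at this
    exact one_ne_zero this
  -- integrability of Fb * ρ on Ioi 0
  have hFint : ∀ ℓ : ℝ, 0 < ℓ → IntegrableOn (fun b => Fb b ℓ * ρ b) (Set.Ioi 0) := by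
    intro ℓ hℓ
    apply Integrable.mono' hρ_int.integrableOn
      (((Fb_continuous_b ℓ).measurable.mul hρ_meas).aestronglyMeasurable)
    refine (ae_restrict_iff' measurableSet_Ioi).2 (Eventually.of_forall fun b hb => ?_)
    rw [Real.norm_eq_abs, Pi.mul_apply, abs_mul, abs_of_nonneg (hρ_nonneg b),
      abs_of_nonneg (Fb_pos b ℓ).le]
    calc Fb b ℓ * ρ b ≤ 1 * ρ b :=
          mul_le_mul_of_nonneg_right (Fb_le_one hb hℓ) (hρ_nonneg b)
      _ = ρ b := one_mul _
  -- strict positivity helper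
  have hstrict : ∀ w : ℝ → ℝ, Measurable w → (∀ b ∈ Set.Ioi (0:ℝ), 0 < w b) →
      (∀ b ∈ Set.Ioi (0:ℝ), w b ≤ 1) → 0 < ∫ b in Set.Ioi 0, w b * ρ b := by
    intro w hw hwpos hwle
    have hint : IntegrableOn (fun b => w b * ρ b) (Set.Ioi 0) := by
      apply Integrable.mono' hρ_int.integrableOn ((hw.mul hρ_meas).aestronglyMeasurable)
      refine (ae_restrict_iff' measurableSet_Ioi).2 (Eventually.of_forall fun b hb => ?_)
      rw [Real.norm_eq_abs, Pi.mul_apply, abs_mul, abs_of_nonneg (hρ_nonneg b),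
        abs_of_nonneg (hwpos b hb).le]
      calc w b * ρ b ≤ 1 * ρ b := mul_le_mul_of_nonneg_right (hwle b hb) (hρ_nonneg b)
        _ = ρ b := one_mul _
    have hnng : 0 ≤ᵐ[volume.restrict (Set.Ioi 0)] fun b => w b * ρ b :=
      (ae_restrict_iff' measurableSet_Ioi).2 (Eventually.of_forall fun b hb =>
        mul_nonneg (hwpos b hb).le (hρ_nonneg b))
    refine (setIntegral_pos_iff_support_of_nonneg_ae hnng hint).2 ?_
    refine lt_of_lt_of_le hT (measure_mono ?_)
    rintro b ⟨hb1, hb2⟩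
    exact ⟨(mul_pos (hwpos b hb2) hb1).ne', hb2⟩
  have hρIoi : IntegrableOn ρ (Set.Ioi 0) := hρ_int.integrableOn
  have hFb_meas : ∀ ℓ : ℝ, Measurable fun b => Fb b ℓ := fun ℓ => (Fb_continuous_b ℓ).measurable
  -- strict antitonicity
  have hanti : StrictAntiOn α (Set.Ioi 0) := by
    intro ℓ₁ h₁ ℓ₂ h₂ hlt
    rw [hα, hα, hG, hG]
    have key : 0 < ∫ b in Set.Ioi 0, (Fb b ℓ₁ - Fb b ℓ₂) * ρ b := by
      apply hstrict (fun b => Fb b ℓ₁ - Fb b ℓ₂) ((hFb_meas ℓ₁).sub (hFb_meas ℓ₂))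
      · intro b _
        exact sub_pos.2 (Fb_strictAntiOn b h₁ h₂ hlt)
      · intro b hb
        linarith [Fb_pos b ℓ₂, Fb_le_one hb h₁]
    have hsubint : ∫ b in Set.Ioi 0, (Fb b ℓ₁ - Fb b ℓ₂) * ρ b
        = (∫ b in Set.Ioi 0, Fb b ℓ₁ * ρ b) - ∫ b in Set.Ioi 0, Fb b ℓ₂ * ρ b := by
      simp_rw [sub_mul]
      exact integral_sub (hFint ℓ₁ h₁) (hFint ℓ₂ h₂)
    linarith
  -- range bounds
  have hmaps : ∀ ℓ ∈ Set.Ioi (0:ℝ), α ℓ ∈ Set.Ioo 0 αmax := by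
    intro ℓ hℓ
    constructor
    · rw [hα]
      have hint : Integrable (fun b => stdNormalCDF (b / ℓ - ℓ / 2)) μB := by
        apply Integrable.mono' (integrable_const (1:ℝ)) (hcdf_meas ℓ).aestronglyMeasurable
        exact Eventually.of_forall fun b => by rw [Real.norm_eq_abs]; exact hcdf_bd _
      have hpos := (integral_pos_iff_support_of_nonneg_ae
        (Eventually.of_forall fun b => (stdNormalCDF_pos _).le) hint).2 ?_
      · linarith
      · have hsupp : Function.support (fun b : ℝ => stdNormalCDF (b / ℓ - ℓ / 2)) =
            Set.univ := by
          ext b; simp [Function.mem_support, (stdNormalCDF_pos _).ne']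
        rw [hsupp]
        simp
    · rw [hα, hαmax, hG, hmaxrep]
      have key : 0 < ∫ b in Set.Ioi 0, (1 - Fb b ℓ) * ρ b := by
        apply hstrict (fun b => 1 - Fb b ℓ) (measurable_const.sub (hFb_meas ℓ))
        · intro b hb
          exact sub_pos.2 (Fb_lt_one hb hℓ)
        · intro b _
          linarith [Fb_pos b ℓ]
      have hsubint : ∫ b in Set.Ioi 0, (1 - Fb b ℓ) * ρ b
          = (∫ b in Set.Ioi 0, ρ b) - ∫ b in Set.Ioi 0, Fb b ℓ * ρ b := by
        simp_rw [sub_mul, one_mul]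
        exact integral_sub hρIoi (hFint ℓ hℓ)
      linarith
  -- continuity
  have hα' : α = fun ℓ => 2 * ∫ b, stdNormalCDF (b / ℓ - ℓ / 2) ∂μB := funext hα
  have hcont : ContinuousOn α (Set.Ioi 0) := by
    rw [hα']
    intro ℓ₀ hℓ₀
    apply ContinuousAt.continuousWithinAt
    have H : ContinuousAt (fun ℓ => ∫ b, stdNormalCDF (b / ℓ - ℓ / 2) ∂μB) ℓ₀ := by
      apply continuousAt_of_dominated (bound := fun _ => (1:ℝ))
      · exact Eventually.of_forall fun ℓ => (hcdf_meas ℓ).aestronglyMeasurable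
      · exact Eventually.of_forall fun ℓ => Eventually.of_forall fun b => by
          rw [Real.norm_eq_abs]; exact hcdf_bd _
      · exact integrable_const 1
      · refine Eventually.of_forall fun b => ?_
        have hin : ContinuousAt (fun ℓ : ℝ => b / ℓ - ℓ / 2) ℓ₀ :=
          ((continuousAt_const.div continuousAt_id (Set.mem_Ioi.mp hℓ₀).ne').sub
            (continuousAt_id.div_const 2))
        exact (stdNormalCDF_continuous.continuousAt).comp hin
    exact continuousAt_const.mul H
  -- limit at infinity
  have htop : Tendsto α atTop (𝓝 0) := by
    rw [hα']
    have H : Tendsto (fun ℓ => ∫ b, stdNormalCDF (b / ℓ - ℓ / 2) ∂μB) atTop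
        (𝓝 (∫ _ : ℝ, (0:ℝ) ∂μB)) := by
      apply tendsto_integral_filter_of_dominated_convergence (fun _ => (1:ℝ))
      · exact Eventually.of_forall fun ℓ => (hcdf_meas ℓ).aestronglyMeasurable
      · exact Eventually.of_forall fun ℓ => Eventually.of_forall fun b => by
          rw [Real.norm_eq_abs]; exact hcdf_bd _
      · exact integrable_const 1
      · exact Eventually.of_forall fun b => stdNormalCDF_tendsto_atBot.comp (aux_inf b)
    simp only [integral_zero] at H
    simpa using H.const_mul 2
  -- limit at zero
  have hzero : Tendsto α (𝓝[>] 0) (𝓝 αmax) := by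
    rw [hα']
    have hae : ∀ᵐ b ∂μB, b ≠ 0 := by
      rw [ae_iff]
      have hset : {b : ℝ | ¬ b ≠ 0} = {(0:ℝ)} := by ext b; simp
      rw [hset, hμB, withDensity_apply _ (measurableSet_singleton 0),
        Measure.restrict_eq_zero.2 (by simp)]
      simp
    have H : Tendsto (fun ℓ => ∫ b, stdNormalCDF (b / ℓ - ℓ / 2) ∂μB) (𝓝[>] 0)
        (𝓝 (∫ b, Set.indicator (Set.Ioi 0) (fun _ => (1:ℝ)) b ∂μB)) := by
      apply tendsto_integral_filter_of_dominated_convergence (fun _ => (1:ℝ))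
      · exact Eventually.of_forall fun ℓ => (hcdf_meas ℓ).aestronglyMeasurable
      · exact Eventually.of_forall fun ℓ => Eventually.of_forall fun b => by
          rw [Real.norm_eq_abs]; exact hcdf_bd _
      · exact integrable_const 1
      · filter_upwards [hae] with b hb
        rcases hb.lt_or_gt with h | h
        · have hind : Set.indicator (Set.Ioi 0) (fun _ => (1:ℝ)) b = 0 :=
            Set.indicator_of_notMem (by simp only [Set.mem_Ioi, not_lt]; exact h.le) _
          rw [hind]
          simpa [Function.comp_def] using stdNormalCDF_tendsto_atBot.comp (aux_bot h)
        · have hind : Set.indicator (Set.Ioi 0) (fun _ => (1:ℝ)) b = 1 :=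
            Set.indicator_of_mem (Set.mem_Ioi.2 h) _
          rw [hind]
          simpa [Function.comp_def] using stdNormalCDF_tendsto_atTop.comp (aux_top h)
    rw [integral_indicator_const (1:ℝ) measurableSet_Ioi, smul_eq_mul, mul_one] at H
    rw [hαmax]
    simpa [mul_comm, Measure.real] using H.const_mul 2
  refine ⟨hcont, hanti, htop, hzero, fun ℓ hℓ => hmaps ℓ hℓ, hanti.injOn, ?_⟩
  -- surjectivity
  intro y hy
  obtain ⟨hy0, hy1⟩ := hy
  obtain ⟨ℓ₂, hℓ₂lt, hℓ₂pos⟩ :=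
    ((htop.eventually_lt_const hy0).and (eventually_gt_atTop 0)).exists
  have h1' : ∀ᶠ ℓ in 𝓝[>] (0:ℝ), ℓ < ℓ₂ ∧ 0 < ℓ := by
    filter_upwards [Ioo_mem_nhdsGT hℓ₂pos] with t ht using ⟨ht.2, ht.1⟩
  obtain ⟨ℓ₁, hy1', hℓ₁lt, hℓ₁pos⟩ :=
    ((hzero.eventually_const_lt hy1).and h1').exists
  have hsub : Set.Icc ℓ₁ ℓ₂ ⊆ Set.Ioi 0 := fun t ht => lt_of_lt_of_le hℓ₁pos ht.1
  obtain ⟨ℓ, hℓmem, hℓeq⟩ :=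
    intermediate_value_Icc' hℓ₁lt.le (hcont.mono hsub) ⟨hℓ₂lt.le, hy1'.le⟩
  exact ⟨ℓ, hsub hℓmem, hℓeq⟩
end

section
/- (Limit of the optimal scaling as the noise grows.) Let (τ_n) be a sequence of positive reals with τ_n → ∞, and for each n let ℓ_n > 0 satisfy the critical-point equation Φ(−√(ℓ_n² + τ_n²)/2) = (ℓ_n²/4) · φ(√(ℓ_n² + τ_n²)/2) / √(ℓ_n² + τ_n²), where Φ is the standard normal cumulative distribution function and φ its density. Then ℓ_n → 2√2 as n → ∞. -/
open MeasureTheory ProbabilityTheory Real Filter Topology Set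

/-- The standard normal density `φ(x) = e^{−x²/2}/√(2π)`. -/
noncomputable def stdNormalPDF (x : ℝ) : ℝ :=
  Real.exp (-x ^ 2 / 2) / Real.sqrt (2 * Real.pi)

lemma gauss_integrable' : Integrable (fun t : ℝ => Real.exp (-t ^ 2 / 2)) := by
  have h := integrable_exp_neg_mul_sq (b := (2:ℝ)⁻¹) (by norm_num)
  convert h using 2 with t
  ring_nf

lemma gauss_mul_integrable' : Integrable (fun t : ℝ => t * Real.exp (-t ^ 2 / 2)) := by
  have h := integrable_mul_exp_neg_mul_sq (b := (2:ℝ)⁻¹) (by norm_num)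
  convert h using 2 with t
  ring_nf

lemma sq_tendsto_atBot' : Tendsto (fun t : ℝ => t ^ 2) atBot atTop := by
  have h1 : Tendsto (fun u : ℝ => u ^ 2) atTop atTop := tendsto_pow_atTop (by norm_num)
  have h2 := h1.comp tendsto_neg_atBot_atTop
  refine h2.congr fun t => by simp [neg_pow]

lemma gauss_tendsto_atBot' : Tendsto (fun t : ℝ => Real.exp (-t ^ 2 / 2)) atBot (𝓝 0) := by
  apply Real.tendsto_exp_atBot.comp
  have h3 : Tendsto (fun t : ℝ => t ^ 2 / 2) atBot atTop :=
    sq_tendsto_atBot'.atTop_div_const (by norm_num)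
  have h4 := tendsto_neg_atTop_atBot.comp h3
  refine h4.congr fun t => by simp [Function.comp]; ring

lemma gauss_upper_bound {x : ℝ} (hx : 0 < x) :
    (∫ t in Iic (-x), Real.exp (-t ^ 2 / 2)) ≤ Real.exp (-x ^ 2 / 2) / x := by
  have hint : IntegrableOn (fun t : ℝ => -t / x * Real.exp (-t ^ 2 / 2)) (Iic (-x)) := by
    have := (gauss_mul_integrable'.const_mul (-x⁻¹)).integrableOn (s := Iic (-x))
    refine this.congr_fun (fun t _ => by field_simp) measurableSet_Iic
  have heq : (∫ t in Iic (-x), -t / x * Real.exp (-t ^ 2 / 2)) = Real.exp (-x ^ 2 / 2) / x := by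
    have hder : ∀ t ∈ Iic (-x), HasDerivAt (fun t : ℝ => Real.exp (-t ^ 2 / 2) / x)
        (-t / x * Real.exp (-t ^ 2 / 2)) t := by
      intro t _
      have h1 : HasDerivAt (fun t : ℝ => -t ^ 2 / 2) (-t) t := by
        have := ((hasDerivAt_pow 2 t).neg).div_const (2:ℝ)
        refine this.congr_deriv ?_
        norm_num; field_simp
      have h2 := (h1.exp).div_const x
      refine h2.congr_deriv ?_
      ring
    have := integral_Iic_of_hasDerivAt_of_tendsto' hder hint
      (by simpa using (gauss_tendsto_atBot'.div_const x))
    rw [this]; ring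
  rw [← heq]
  apply setIntegral_mono_on (gauss_integrable'.integrableOn) hint measurableSet_Iic
  intro t ht
  have ht' : x ≤ -t := by simp at ht; linarith
  have h1 : 1 ≤ -t / x := (one_le_div hx).mpr ht'
  nth_rewrite 1 [← one_mul (Real.exp _)]
  exact mul_le_mul_of_nonneg_right h1 (Real.exp_pos _).le

lemma gauss_lower_bound {x : ℝ} (hx : 0 < x) :
    (1 / x - 1 / x ^ 3) * Real.exp (-x ^ 2 / 2) ≤ ∫ t in Iic (-x), Real.exp (-t ^ 2 / 2) := by
  have hx4 : (0:ℝ) < x ^ 4 := by positivity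
  have hint : IntegrableOn (fun t : ℝ => (1 - 3 / t ^ 4) * Real.exp (-t ^ 2 / 2)) (Iic (-x)) := by
    apply Integrable.mono' ((gauss_integrable'.const_mul (1 + 3 / x ^ 4)).integrableOn)
    · apply Measurable.aestronglyMeasurable
      fun_prop
    · filter_upwards [MeasureTheory.ae_restrict_mem measurableSet_Iic] with t ht
      have ht' : t ≤ -x := ht
      have h4 : x ^ 4 ≤ t ^ 4 := by
        have h5 : |x| ≤ |t| := by
          rw [abs_of_pos hx, abs_of_nonpos (by linarith)]; linarith
        calc x ^ 4 = |x| ^ 4 := by rw [abs_of_pos hx]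
          _ ≤ |t| ^ 4 := pow_le_pow_left₀ (abs_nonneg _) h5 4
          _ = t ^ 4 := by rw [← abs_pow, abs_of_nonneg (by positivity)]
      have habs : |1 - 3 / t ^ 4| ≤ 1 + 3 / x ^ 4 := by
        refine (abs_sub _ _).trans ?_
        have h6 : 3 / t ^ 4 ≤ 3 / x ^ 4 := by gcongr
        have h7 : |(3:ℝ) / t ^ 4| = 3 / t ^ 4 := abs_of_nonneg (by positivity)
        simp [h7]
        linarith
      rw [norm_mul, norm_of_nonneg (Real.exp_pos _).le, Real.norm_eq_abs]
      exact mul_le_mul habs le_rfl (Real.exp_pos _).le (by positivity)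
  have heq : (∫ t in Iic (-x), (1 - 3 / t ^ 4) * Real.exp (-t ^ 2 / 2))
      = (1 / x - 1 / x ^ 3) * Real.exp (-x ^ 2 / 2) := by
    have hder : ∀ t ∈ Iic (-x), HasDerivAt
        (fun t : ℝ => (-t⁻¹ + (t ^ 3)⁻¹) * Real.exp (-t ^ 2 / 2))
        ((1 - 3 / t ^ 4) * Real.exp (-t ^ 2 / 2)) t := by
      intro t ht
      have htne : t ≠ 0 := by
        have : t ≤ -x := ht
        intro h; rw [h] at this; linarith
      have h1 : HasDerivAt (fun t : ℝ => -t⁻¹ + (t ^ 3)⁻¹)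
          (-(-(t ^ 2)⁻¹) + -(3 * t ^ 2) / (t ^ 3) ^ 2) t :=
        (hasDerivAt_inv htne).neg.add
          (((hasDerivAt_pow 3 t).inv (pow_ne_zero 3 htne)).congr_deriv (by norm_num))
      have h2 : HasDerivAt (fun t : ℝ => Real.exp (-t ^ 2 / 2)) (-t * Real.exp (-t ^ 2 / 2)) t := by
        have h3 : HasDerivAt (fun t : ℝ => -t ^ 2 / 2) (-t) t := by
          have := ((hasDerivAt_pow 2 t).neg).div_const (2:ℝ)
          refine this.congr_deriv ?_; norm_num; field_simp
        have := h3.exp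
        convert this using 1; ring
      have := h1.mul h2
      refine this.congr_deriv ?_
      field_simp
      ring
    have := integral_Iic_of_hasDerivAt_of_tendsto' (m := 0) hder hint ?_
    · rw [this]
      have hxne : x ≠ 0 := ne_of_gt hx
      rw [show ((-x) ^ 3 : ℝ) = -x ^ 3 by ring, show ((-x) ^ 2 : ℝ) = x ^ 2 by ring, sub_zero]
      field_simp
      ring
    · have h1 : Tendsto (fun t : ℝ => -t⁻¹ + (t ^ 3)⁻¹) atBot (𝓝 0) := by
        have h2 : Tendsto (fun t : ℝ => t⁻¹) atBot (𝓝 0) := by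
          have := (tendsto_inv_atTop_zero (𝕜 := ℝ)).comp tendsto_neg_atBot_atTop
          have h3 := this.neg
          rw [neg_zero] at h3
          exact h3.congr fun t => by simp [Function.comp, inv_neg]
        have := (h2.neg).add (h2.pow 3)
        simpa [inv_pow] using this
      simpa using h1.mul gauss_tendsto_atBot'
  rw [← heq]
  apply setIntegral_mono_on hint (gauss_integrable'.integrableOn) measurableSet_Iic
  intro t ht
  have h1 : (0:ℝ) ≤ 3 / t ^ 4 := by positivity
  nth_rewrite 2 [← one_mul (Real.exp _)]
  exact mul_le_mul_of_nonneg_right (by linarith) (Real.exp_pos _).le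

lemma sqrt2pi_pos : (0:ℝ) < Real.sqrt (2 * Real.pi) :=
  Real.sqrt_pos.mpr (by positivity)

lemma stdNormalCDF_eq (x : ℝ) :
    stdNormalCDF x = (∫ t in Iic x, Real.exp (-t ^ 2 / 2)) / Real.sqrt (2 * Real.pi) := by
  rw [stdNormalCDF, integral_div]

lemma cdf_upper {x : ℝ} (hx : 0 < x) : stdNormalCDF (-x) ≤ stdNormalPDF x / x := by
  rw [stdNormalCDF_eq, stdNormalPDF]
  calc (∫ t in Iic (-x), Real.exp (-t ^ 2 / 2)) / Real.sqrt (2 * Real.pi)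
      ≤ (Real.exp (-x ^ 2 / 2) / x) / Real.sqrt (2 * Real.pi) := by
        gcongr
        exact gauss_upper_bound hx
    _ = Real.exp (-x ^ 2 / 2) / Real.sqrt (2 * Real.pi) / x := by ring

lemma cdf_lower {x : ℝ} (hx : 0 < x) :
    (1 / x - 1 / x ^ 3) * stdNormalPDF x ≤ stdNormalCDF (-x) := by
  rw [stdNormalCDF_eq, stdNormalPDF]
  calc (1 / x - 1 / x ^ 3) * (Real.exp (-x ^ 2 / 2) / Real.sqrt (2 * Real.pi))
      = ((1 / x - 1 / x ^ 3) * Real.exp (-x ^ 2 / 2)) / Real.sqrt (2 * Real.pi) := by ring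
    _ ≤ (∫ t in Iic (-x), Real.exp (-t ^ 2 / 2)) / Real.sqrt (2 * Real.pi) := by
        gcongr
        exact gauss_lower_bound hx

lemma stdNormalPDF_pos (x : ℝ) : 0 < stdNormalPDF x :=
  div_pos (Real.exp_pos _) sqrt2pi_pos

/-- limit of the optimal scaling as the noise grows.  If `τ_n → ∞`
and each `ℓ_n > 0` satisfies the critical-point equation
`Φ(−√(ℓ_n² + τ_n²)/2) = (ℓ_n²/4) φ(√(ℓ_n² + τ_n²)/2)/√(ℓ_n² + τ_n²)`, then
`ℓ_n → 2√2`. -/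
theorem stmt14 (τ ℓ : ℕ → ℝ) (hτ_pos : ∀ n, 0 < τ n) (hℓ_pos : ∀ n, 0 < ℓ n)
    (hτ : Tendsto τ atTop atTop)
    (hcrit : ∀ n,
      stdNormalCDF (-Real.sqrt ((ℓ n) ^ 2 + (τ n) ^ 2) / 2) =
        (ℓ n) ^ 2 / 4 * stdNormalPDF (Real.sqrt ((ℓ n) ^ 2 + (τ n) ^ 2) / 2) /
          Real.sqrt ((ℓ n) ^ 2 + (τ n) ^ 2)) :
    Tendsto ℓ atTop (𝓝 (2 * Real.sqrt 2)) := by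
  set x : ℕ → ℝ := fun n => Real.sqrt ((ℓ n) ^ 2 + (τ n) ^ 2) / 2 with hxdef
  have hx_pos : ∀ n, 0 < x n := fun n => by
    have h0 : (0:ℝ) < (ℓ n) ^ 2 + (τ n) ^ 2 := by
      have := hτ_pos n; positivity
    have h2 : 0 < Real.sqrt ((ℓ n) ^ 2 + (τ n) ^ 2) := Real.sqrt_pos.mpr h0
    exact div_pos h2 (by norm_num)
  have hx_ge : ∀ n, τ n / 2 ≤ x n := fun n => by
    have h1 : τ n ≤ Real.sqrt ((ℓ n) ^ 2 + (τ n) ^ 2) := by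
      have h2 := Real.sqrt_le_sqrt (show (τ n) ^ 2 ≤ (ℓ n) ^ 2 + (τ n) ^ 2 by
        nlinarith [sq_nonneg (ℓ n)])
      rwa [Real.sqrt_sq (hτ_pos n).le] at h2
    simp only [hxdef]
    linarith
  have hx_atTop : Tendsto x atTop atTop :=
    tendsto_atTop_mono hx_ge (hτ.atTop_div_const (by norm_num))
  -- rewrite the critical equation
  have hcrit' : ∀ n, stdNormalCDF (-(x n)) =
      (ℓ n) ^ 2 * stdNormalPDF (x n) / (8 * x n) := by
    intro n
    have h := hcrit n
    rw [neg_div] at h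
    have hs : Real.sqrt ((ℓ n) ^ 2 + (τ n) ^ 2) = 2 * x n := by
      simp only [hxdef]; ring
    rw [hs] at h
    have hx2 : 2 * x n / 2 = x n := by ring
    rw [hx2] at h
    rw [h]
    ring
  have hP : ∀ n, 0 < stdNormalPDF (x n) := fun n => stdNormalPDF_pos _
  have hℓsq : ∀ n, (ℓ n) ^ 2 = 8 * x n * stdNormalCDF (-(x n)) / stdNormalPDF (x n) := by
    intro n
    rw [hcrit' n]
    have h1 := (hP n).ne'
    have h2 := (hx_pos n).ne'
    field_simp
  have hupper : ∀ n, (ℓ n) ^ 2 ≤ 8 := by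
    intro n
    rw [hℓsq n]
    have h1 := cdf_upper (hx_pos n)
    have h2 := hP n
    have h3 := hx_pos n
    calc 8 * x n * stdNormalCDF (-(x n)) / stdNormalPDF (x n)
        ≤ 8 * x n * (stdNormalPDF (x n) / x n) / stdNormalPDF (x n) := by gcongr
      _ = 8 := by field_simp
  have hlower : ∀ n, 8 * (1 - 1 / (x n) ^ 2) ≤ (ℓ n) ^ 2 := by
    intro n
    rw [hℓsq n]
    have h1 := cdf_lower (hx_pos n)
    have h2 := hP n
    have h3 := hx_pos n
    calc 8 * (1 - 1 / (x n) ^ 2)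
        = 8 * x n * ((1 / x n - 1 / (x n) ^ 3) * stdNormalPDF (x n)) / stdNormalPDF (x n) := by
          field_simp
      _ ≤ 8 * x n * stdNormalCDF (-(x n)) / stdNormalPDF (x n) := by gcongr
  have hsq : Tendsto (fun n => (ℓ n) ^ 2) atTop (𝓝 8) := by
    have hlow_lim : Tendsto (fun n => 8 * (1 - 1 / (x n) ^ 2)) atTop (𝓝 8) := by
      have h1 : Tendsto (fun n => 1 / (x n) ^ 2) atTop (𝓝 0) := by
        have h2 : Tendsto (fun n => (x n) ^ 2) atTop atTop :=
          (tendsto_pow_atTop (n := 2) (by norm_num)).comp hx_atTop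
        simpa [one_div, Pi.inv_def] using h2.inv_tendsto_atTop
      have := ((tendsto_const_nhds (x := (1:ℝ))).sub h1).const_mul (8:ℝ)
      simpa using this
    exact tendsto_of_tendsto_of_tendsto_of_le_of_le hlow_lim tendsto_const_nhds hlower hupper
  have h8 : Real.sqrt 8 = 2 * Real.sqrt 2 := by
    rw [show (8:ℝ) = 2 ^ 2 * 2 by norm_num, Real.sqrt_mul (by positivity),
      Real.sqrt_sq (by norm_num)]
  have hfinal := (Real.continuous_sqrt.continuousAt (x := (8:ℝ))).tendsto.comp hsq
  rw [h8] at hfinal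
  exact hfinal.congr fun n => by
    simp [Function.comp, Real.sqrt_sq (hℓ_pos n).le]
end

section
/- (Reversibility symmetry of the noise chain.) Fix ℓ > 0 and let Ω be a Gaussian random variable with mean −ℓ²/2 and variance ℓ². Then for all x, y ∈ ℝ, e^x · E[min(1, exp(Ω + y − x))] = e^y · E[min(1, exp(Ω + x − y))]; explicitly, both sides equal e^x Φ((−ℓ²/2 + y − x)/ℓ) + e^y Φ((−ℓ²/2 + x − y)/ℓ), where Φ is the standard normal cumulative distribution function, and this expression is symmetric in (x, y). -/
open MeasureTheory ProbabilityTheory Real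

noncomputable def stdPhi (t : ℝ) : ℝ := Real.exp (-t ^ 2 / 2) / Real.sqrt (2 * Real.pi)

lemma stdNormalCDF_eq_s17 (x : ℝ) : stdNormalCDF x = ∫ t in Set.Iic x, stdPhi t := rfl

lemma stdPhi_eq_pdf : gaussianPDFReal 0 1 = stdPhi := by
  funext t
  simp only [gaussianPDFReal, stdPhi, NNReal.coe_one, mul_one, sub_zero]
  ring

lemma stdPhi_nonneg (t : ℝ) : 0 ≤ stdPhi t :=
  div_nonneg (Real.exp_pos _).le (Real.sqrt_nonneg _)

lemma stdPhi_continuous : Continuous stdPhi := by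
  unfold stdPhi; fun_prop

lemma stdPhi_integrable : Integrable stdPhi := by
  rw [← stdPhi_eq_pdf]; exact integrable_gaussianPDFReal 0 1

open Set in
lemma integral_Iic_comp_sub (f : ℝ → ℝ) (a b : ℝ) :
    ∫ x in Iic b, f (x - a) = ∫ x in Iic (b - a), f x := by
  have A : MeasurableEmbedding fun x : ℝ => x - a :=
    (Homeomorph.subRight a).isClosedEmbedding.measurableEmbedding
  have hmap : Measure.map (fun x : ℝ => x - a) volume = volume := by
    simpa [sub_eq_add_neg] using map_add_right_eq_self (volume : Measure ℝ) (-a)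
  have h := A.setIntegral_map (μ := (volume : Measure ℝ)) f (Iic (b - a))
  rw [hmap] at h
  have hpre : (fun x : ℝ => x - a) ⁻¹' Iic (b - a) = Iic b := by
    ext x; simp [sub_le_sub_iff_right]
  rw [h, hpre]

open Set in
lemma integral_stdPhi_Ioi (t₀ : ℝ) : ∫ t in Ioi t₀, stdPhi t = stdNormalCDF (-t₀) := by
  have h := integral_comp_neg_Iic (-t₀) stdPhi
  rw [neg_neg] at h
  rw [stdNormalCDF_eq_s17, ← h]
  refine setIntegral_congr_fun measurableSet_Iic fun t _ => ?_
  simp [stdPhi, neg_sq]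

open Set in
lemma gauss_min (ℓ : ℝ) (hℓ : 0 < ℓ) (a b : ℝ) :
    (∫ ω, min 1 (Real.exp (ω + b - a))
        ∂(gaussianReal (-ℓ ^ 2 / 2) ⟨ℓ ^ 2, sq_nonneg ℓ⟩))
      = stdNormalCDF ((-ℓ ^ 2 / 2 + b - a) / ℓ)
        + Real.exp (b - a) * stdNormalCDF ((-ℓ ^ 2 / 2 + a - b) / ℓ) := by
  set μ : ℝ := -ℓ ^ 2 / 2 with hμ
  set c : ℝ := b - a with hc
  -- rewrite integrand
  have hintgd : (fun ω => min 1 (Real.exp (ω + b - a)))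
      = fun ω => min 1 (Real.exp (ω + c)) := by
    funext ω; rw [hc, add_sub_assoc]
  -- measure as map of standard gaussian
  have h1 : (gaussianReal 0 1).map (fun t => ℓ * t) = gaussianReal 0 ⟨ℓ ^ 2, sq_nonneg ℓ⟩ := by
    rw [gaussianReal_map_const_mul]
    congr 1
    · ring
    · exact mul_one _
  have h2 : (gaussianReal (0 : ℝ) ⟨ℓ ^ 2, sq_nonneg ℓ⟩).map (· + μ)
      = gaussianReal μ ⟨ℓ ^ 2, sq_nonneg ℓ⟩ := by
    have := gaussianReal_map_add_const (μ := 0) (v := ⟨ℓ ^ 2, sq_nonneg ℓ⟩) μ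
    rw [zero_add] at this; exact this
  have hmeas : gaussianReal μ ⟨ℓ ^ 2, sq_nonneg ℓ⟩
      = (gaussianReal 0 1).map (fun t => ℓ * t + μ) := by
    rw [← h2, ← h1, Measure.map_map (by fun_prop) (by fun_prop)]
    rfl
  have hgcont : Continuous fun t : ℝ => min 1 (Real.exp (ℓ * t + μ + c)) := by fun_prop
  have hfcont : Continuous fun ω : ℝ => min 1 (Real.exp (ω + c)) := by fun_prop
  rw [hintgd, hmeas, integral_map (by fun_prop) hfcont.aestronglyMeasurable]
  have harg : ∀ t : ℝ, ℓ * t + μ + c = ℓ * t + μ + c := fun _ => rfl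
  -- to density integral
  have hpdf : gaussianPDF 0 1 = fun x => ((stdPhi x).toNNReal : ENNReal) := by
    funext x
    rw [gaussianPDF, stdPhi_eq_pdf]
    rfl
  rw [gaussianReal_of_var_ne_zero 0 one_ne_zero, hpdf,
    integral_withDensity_eq_integral_smul
      stdPhi_continuous.measurable.real_toNNReal _]
  have hsmul : (fun t => (stdPhi t).toNNReal • min 1 (Real.exp (ℓ * t + μ + c)))
      = fun t => stdPhi t * min 1 (Real.exp (ℓ * t + μ + c)) := by
    funext t
    rw [NNReal.smul_def, Real.coe_toNNReal _ (stdPhi_nonneg t), smul_eq_mul]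
  rw [hsmul]
  -- split the integral at t₀
  set t₀ : ℝ := -(μ + c) / ℓ with ht₀
  set F : ℝ → ℝ := fun t => stdPhi t * min 1 (Real.exp (ℓ * t + μ + c)) with hF
  have hFle : ∀ t, ‖F t‖ ≤ ‖stdPhi t‖ := by
    intro t
    rw [Real.norm_eq_abs, Real.norm_eq_abs, abs_of_nonneg (stdPhi_nonneg t),
      abs_of_nonneg (mul_nonneg (stdPhi_nonneg t)
        (le_min zero_le_one (Real.exp_pos _).le))]
    calc stdPhi t * min 1 (Real.exp (ℓ * t + μ + c)) ≤ stdPhi t * 1 :=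
          mul_le_mul_of_nonneg_left (min_le_left _ _) (stdPhi_nonneg t)
      _ = stdPhi t := mul_one _
  have hFint : Integrable F :=
    stdPhi_integrable.mono (stdPhi_continuous.mul hgcont).aestronglyMeasurable
      (Filter.Eventually.of_forall hFle)
  rw [← intervalIntegral.integral_Iic_add_Ioi (hFint.integrableOn) (hFint.integrableOn)]
  -- left piece
  have hleft : ∫ t in Iic t₀, F t
      = Real.exp (μ + c + ℓ ^ 2 / 2) * stdNormalCDF (t₀ - ℓ) := by
    have step1 : ∫ t in Iic t₀, F t
        = ∫ t in Iic t₀, Real.exp (μ + c + ℓ ^ 2 / 2) * stdPhi (t - ℓ) := by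
      refine setIntegral_congr_fun measurableSet_Iic fun t ht => ?_
      have hle : ℓ * t + μ + c ≤ 0 := by
        rw [Set.mem_Iic, ht₀, le_div_iff₀ hℓ] at ht
        nlinarith
      rw [hF]
      simp only
      rw [min_eq_right (Real.exp_le_one_iff.mpr hle)]
      unfold stdPhi
      rw [div_mul_eq_mul_div, ← Real.exp_add, ← mul_div_assoc, ← Real.exp_add]
      congr 2
      ring
    rw [step1, integral_const_mul _ _, integral_Iic_comp_sub stdPhi ℓ t₀, stdNormalCDF_eq_s17]
  -- right piece
  have hright : ∫ t in Ioi t₀, F t = stdNormalCDF (-t₀) := by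
    have step1 : ∫ t in Ioi t₀, F t = ∫ t in Ioi t₀, stdPhi t := by
      refine setIntegral_congr_fun measurableSet_Ioi fun t ht => ?_
      have hge : 0 ≤ ℓ * t + μ + c := by
        rw [Set.mem_Ioi, ht₀, div_lt_iff₀ hℓ] at ht
        nlinarith
      rw [hF]
      simp only
      rw [min_eq_left (Real.one_le_exp hge), mul_one]
    rw [step1, integral_stdPhi_Ioi]
  rw [hleft, hright]
  have e1 : -t₀ = (μ + b - a) / ℓ := by rw [ht₀, hc]; ring
  have e2 : t₀ - ℓ = (μ + a - b) / ℓ := by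
    rw [ht₀, hc, hμ]; field_simp; ring
  have e3 : μ + c + ℓ ^ 2 / 2 = b - a := by rw [hμ, hc]; ring
  rw [e1, e2, e3, add_comm]

/-- reversibility symmetry of the noise chain.  For
`Ω ∼ N(−ℓ²/2, ℓ²)` and all `x, y ∈ ℝ`,
`e^x E[min(1, exp(Ω + y − x))] = e^y E[min(1, exp(Ω + x − y))]`, both sides being
equal to `e^x Φ((−ℓ²/2 + y − x)/ℓ) + e^y Φ((−ℓ²/2 + x − y)/ℓ)`, which is
symmetric in `(x, y)`. -/
theorem stmt17 (ℓ : ℝ) (hℓ : 0 < ℓ) (x y : ℝ) :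
    Real.exp x * (∫ ω, min 1 (Real.exp (ω + y - x))
        ∂(gaussianReal (-ℓ ^ 2 / 2) ⟨ℓ ^ 2, sq_nonneg ℓ⟩)) =
      Real.exp x * stdNormalCDF ((-ℓ ^ 2 / 2 + y - x) / ℓ) +
        Real.exp y * stdNormalCDF ((-ℓ ^ 2 / 2 + x - y) / ℓ) ∧
    Real.exp x * (∫ ω, min 1 (Real.exp (ω + y - x))
        ∂(gaussianReal (-ℓ ^ 2 / 2) ⟨ℓ ^ 2, sq_nonneg ℓ⟩)) =
      Real.exp y * ∫ ω, min 1 (Real.exp (ω + x - y))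
        ∂(gaussianReal (-ℓ ^ 2 / 2) ⟨ℓ ^ 2, sq_nonneg ℓ⟩) := by
  have key : ∀ a b : ℝ,
      Real.exp a * (∫ ω, min 1 (Real.exp (ω + b - a))
          ∂(gaussianReal (-ℓ ^ 2 / 2) ⟨ℓ ^ 2, sq_nonneg ℓ⟩)) =
        Real.exp a * stdNormalCDF ((-ℓ ^ 2 / 2 + b - a) / ℓ) +
          Real.exp b * stdNormalCDF ((-ℓ ^ 2 / 2 + a - b) / ℓ) := by
    intro a b
    rw [gauss_min ℓ hℓ a b, mul_add, ← mul_assoc, ← Real.exp_add,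
      show a + (b - a) = b by ring]
  refine ⟨key x y, ?_⟩
  rw [key x y, key y x, add_comm]
end
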